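/- Fix x ∈ [0.1, 0.9] and ε with 0 < ε ≤ 1/1600, and let F_x be the explicit piecewise function defined in the context. Then F_x(x + 2√ε) = x + 2√ε + ε, and consequently for every η with 0 ≤ η < ε/2 the Levy-distance condition fails at v = x + 2√ε: F_x(v) > (v + η) + η, where v + η is the value of the uniform cdf F*(v) = v at v + η. Hence the Levy distance between the distribution with cdf F_x and the uniform distribution on [0,1] is at least ε/2. -/

import Mathlib

/-!
At `v = x + 2√ε` the bump added to the uniform cdf reaches its peak height `ε`, and this point
lies in `[0, 1]`; the upper Levy inequality `F_x(v) ≤ v + 2η` there forces `η ≥ ε / 2`.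
-/

/-- The cdf `F_x` of the perturbed uniform distribution `D_x`. -/
noncomputable def Fx (x ε : ℝ) (v : ℝ) : ℝ :=
  if v < x then v
  else if v ≤ x + Real.sqrt ε then v + (v - x) ^ 2 / 2
  else if v < x + 2 * Real.sqrt ε then v + ε - (x + 2 * Real.sqrt ε - v) ^ 2 / 2
  else if v < x + 3 * Real.sqrt ε then v + ε - (v - x - 2 * Real.sqrt ε) ^ 2 / 2
  else if v ≤ x + 4 * Real.sqrt ε then v + (x + 4 * Real.sqrt ε - v) ^ 2 / 2
  else v

theorem Fx_add_two_mul_sqrt (x : ℝ) {ε : ℝ} (hε : 0 < ε) :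
    Fx x ε (x + 2 * Real.sqrt ε) = x + 2 * Real.sqrt ε + ε := by
  have hs : 0 < Real.sqrt ε := Real.sqrt_pos.mpr hε
  unfold Fx
  rw [if_neg (by linarith), if_neg (by linarith), if_neg (by linarith), if_pos (by linarith)]
  ring

theorem sqrt_le_one_div_forty {ε : ℝ} (hε : ε ≤ 1 / 1600) : Real.sqrt ε ≤ 1 / 40 := by
  rw [Real.sqrt_le_left (by norm_num)]
  linarith

theorem add_two_mul_sqrt_mem_Icc {x ε : ℝ} (hx : x ∈ Set.Icc (0.1 : ℝ) 0.9)
    (hε : ε ≤ 1 / 1600) : x + 2 * Real.sqrt ε ∈ Set.Icc (0 : ℝ) 1 := by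
  have hs := sqrt_le_one_div_forty hε
  have hs₀ := Real.sqrt_nonneg ε
  constructor <;> linarith [hx.1, hx.2]

theorem half_le_of_apply_eq_add_of_le_add_add {F : ℝ → ℝ} {S : Set ℝ} {v ε η : ℝ} (hv : v ∈ S)
    (hFv : F v = v + ε) (hlevy : ∀ w ∈ S, F w ≤ (w + η) + η) : ε / 2 ≤ η := by
  have := hlevy v hv
  linarith

/-- `F_x(x + 2√ε) = x + 2√ε + ε`; hence for every `η < ε/2` the Levy-distance condition
against the uniform cdf `F*(v) = v` fails at `v = x + 2√ε`, so the Levy distance between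
`D_x` and the uniform distribution is at least `ε/2`. -/
theorem Fx_levy_far_from_uniform (x ε : ℝ) (hx : x ∈ Set.Icc (0.1:ℝ) 0.9)
    (hε : 0 < ε) (hε' : ε ≤ 1 / 1600) :
    Fx x ε (x + 2 * Real.sqrt ε) = x + 2 * Real.sqrt ε + ε ∧
    (∀ η : ℝ, 0 ≤ η → η < ε / 2 →
      Fx x ε (x + 2 * Real.sqrt ε) > ((x + 2 * Real.sqrt ε) + η) + η) ∧
    (∀ η : ℝ, 0 ≤ η →
      (∀ v ∈ Set.Icc (0:ℝ) 1, (v - η) - η ≤ Fx x ε v ∧ Fx x ε v ≤ (v + η) + η) →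
      η ≥ ε / 2) := by
  have peak := Fx_add_two_mul_sqrt x hε
  refine ⟨peak, fun η _ hη => by rw [peak]; linarith, fun η _ hlevy => ?_⟩
  exact half_le_of_apply_eq_add_of_le_add_add (add_two_mul_sqrt_mem_Icc hx hε')
    peak fun w hw => (hlevy w hw).2
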